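/- Let Ψ = (1/√2)(e_0 ⊗ ψ_0 + e_1 ⊗ ψ_1) and Φ = (1/√2)(e_0 ⊗ φ_0 + e_1 ⊗ φ_1) be maximally entangled states of two qubits (ψ_0 ⊥ ψ_1, φ_0 ⊥ φ_1 unit vectors), with Ψ ⊥ Φ. If the unitary U = |φ_0⟩⟨ψ_0| + |φ_1⟩⟨ψ_1| is Hermitian, then (1/√2)(Ψ + Φ) is a product state in C^2 ⊗ C^2. -/

import Mathlib

open scoped Matrix

noncomputable section

abbrev Qubit := EuclideanSpace ℂ (Fin 2)
abbrev TwoQubit := EuclideanSpace ℂ (Fin 2 × Fin 2)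

/-- Elementary tensor (product state) of two qubit vectors. -/
def tp (a b : Qubit) : TwoQubit := WithLp.toLp 2 (fun p : Fin 2 × Fin 2 => a p.1 * b p.2)

/-- Standard basis of `ℂ²`. -/
def e (i : Fin 2) : Qubit := EuclideanSpace.single i 1

/-- Reduced density matrix of `|Ψ⟩⟨Ψ|` on the first tensor factor. -/
def rho1 (Ψ : TwoQubit) : Matrix (Fin 2) (Fin 2) ℂ :=
  Matrix.of fun i j => ∑ k, Ψ (i, k) * (starRingEnd ℂ) (Ψ (j, k))

/-- Reduced density matrix of `|Ψ⟩⟨Ψ|` on the second tensor factor. -/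
def rho2 (Ψ : TwoQubit) : Matrix (Fin 2) (Fin 2) ℂ :=
  Matrix.of fun i j => ∑ k, Ψ (k, i) * (starRingEnd ℂ) (Ψ (k, j))

/-- A maximally entangled state of two qubits: a unit vector both of whose
reduced density operators equal `(1/2)·1` (equivalently, both Schmidt
coefficients equal `1/2`). -/
def MaxEnt (Ψ : TwoQubit) : Prop :=
  ‖Ψ‖ = 1 ∧ rho1 Ψ = (1 / 2 : ℂ) • 1 ∧ rho2 Ψ = (1 / 2 : ℂ) • 1

/-- A product state: an elementary tensor. -/
def IsProduct (Ψ : TwoQubit) : Prop := ∃ a b : Qubit, Ψ = tp a b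

/-- The rank-one operator `|a⟩⟨b| : x ↦ ⟨b, x⟩ a`, as a matrix. -/
def ketBra (a b : Qubit) : Matrix (Fin 2) (Fin 2) ℂ :=
  Matrix.vecMulVec a (star (b : Fin 2 → ℂ))

/-!
Identify a vector of `ℂ² ⊗ ℂ²` with its `2 × 2` coefficient matrix: it is a product state
exactly when that matrix is singular. If `A`, `B` are the unitary matrices with columns
`ψⱼ`, `φⱼ`, the coefficient matrix of `Ψ + Φ` is a multiple of `(A + B)ᵀ`, and
`A + B = (1 + U) A` with `U = B A†`. Being unitary and Hermitian, `U` squares to `1`, and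
`tr U = ∑ ⟨ψⱼ, φⱼ⟩ = 2 ⟨Ψ, Φ⟩ = 0`; so the eigenvalues of `U` are `1` and `-1`, and
`det (1 + U) = 0`.
-/

def colMatrix {𝕜 m n : Type*} (v : n → EuclideanSpace 𝕜 m) : Matrix m n 𝕜 :=
  Matrix.of fun i j => v j i

section colMatrix

variable {𝕜 m n : Type*} [RCLike 𝕜] [Fintype m]

theorem conjTranspose_colMatrix_mul_colMatrix_apply (a b : n → EuclideanSpace 𝕜 m) (i j : n) :
    ((colMatrix a)ᴴ * colMatrix b) i j = inner 𝕜 (a i) (b j) := by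
  simp only [Matrix.mul_apply, Matrix.conjTranspose_apply, colMatrix, Matrix.of_apply,
    PiLp.inner_apply, RCLike.inner_apply', RCLike.star_def]

theorem conjTranspose_colMatrix_mul_self_of_orthonormal [DecidableEq n]
    {v : n → EuclideanSpace 𝕜 m} (hv : Orthonormal 𝕜 v) : (colMatrix v)ᴴ * colMatrix v = 1 := by
  ext i j
  rw [conjTranspose_colMatrix_mul_colMatrix_apply, orthonormal_iff_ite.mp hv, Matrix.one_apply]

theorem trace_conjTranspose_colMatrix_mul_colMatrix [Fintype n] (a b : n → EuclideanSpace 𝕜 m) :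
    ((colMatrix a)ᴴ * colMatrix b).trace = ∑ j, inner 𝕜 (a j) (b j) := by
  simp only [Matrix.trace, Matrix.diag, conjTranspose_colMatrix_mul_colMatrix_apply]

end colMatrix

theorem Matrix.det_one_add_eq_zero_of_mul_self_eq_one_of_trace_eq_zero {R : Type*} [CommRing R]
    {M : Matrix (Fin 2) (Fin 2) R} (hM : M * M = 1) (htr : M.trace = 0) : (1 + M).det = 0 := by
  have h00 : M 0 0 * M 0 0 + M 0 1 * M 1 0 = 1 := by
    simpa [Matrix.mul_apply, Fin.sum_univ_two] using congrFun₂ hM 0 0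
  rw [Matrix.trace_fin_two] at htr
  rw [Matrix.det_fin_two]
  simp only [Matrix.add_apply, Matrix.one_apply_eq, Matrix.one_apply_ne (Fin.zero_ne_one),
    Matrix.one_apply_ne (Fin.zero_ne_one.symm)]
  linear_combination (1 + M 0 0) * htr - h00

theorem ketBra_add_ketBra (a0 a1 b0 b1 : Qubit) :
    ketBra b0 a0 + ketBra b1 a1 = colMatrix ![b0, b1] * (colMatrix ![a0, a1])ᴴ := by
  ext i k
  simp [ketBra, colMatrix, Matrix.mul_apply, Fin.sum_univ_two, Matrix.vecMulVec_apply]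

theorem inner_tp_tp (a b c d : Qubit) :
    inner ℂ (tp a b) (tp c d) = inner ℂ a c * inner ℂ b d := by
  simp only [tp, PiLp.inner_apply, RCLike.inner_apply', Fintype.sum_prod_type, map_mul,
    Finset.sum_mul_sum]
  exact Finset.sum_congr rfl fun _ _ => Finset.sum_congr rfl fun _ _ => by ring

theorem inner_tp_e_add_tp_e (a0 a1 b0 b1 : Qubit) :
    inner ℂ (tp (e 0) a0 + tp (e 1) a1) (tp (e 0) b0 + tp (e 1) b1) =
      inner ℂ a0 b0 + inner ℂ a1 b1 := by
  simp [inner_tp_tp, e, EuclideanSpace.inner_single_left]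

def coeffMatrix (v : TwoQubit) : Matrix (Fin 2) (Fin 2) ℂ := Matrix.of fun i k => v (i, k)

theorem coeffMatrix_add (v w : TwoQubit) : coeffMatrix (v + w) = coeffMatrix v + coeffMatrix w :=
  rfl

theorem coeffMatrix_smul (c : ℂ) (v : TwoQubit) : coeffMatrix (c • v) = c • coeffMatrix v :=
  rfl

theorem coeffMatrix_tp_e_add_tp_e (a0 a1 : Qubit) :
    coeffMatrix (tp (e 0) a0 + tp (e 1) a1) = (colMatrix ![a0, a1])ᵀ := by
  ext i k
  fin_cases i <;> simp [coeffMatrix, colMatrix, tp, e]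

theorem isProduct_of_det_coeffMatrix_eq_zero {v : TwoQubit} (h : (coeffMatrix v).det = 0) :
    IsProduct v := by
  rw [Matrix.det_fin_two] at h
  simp only [coeffMatrix, Matrix.of_apply] at h
  have hminor : ∀ j k, v (1, j) * v (0, k) = v (1, k) * v (0, j) := by
    intro j k
    fin_cases j <;> fin_cases k <;> simp only [Fin.zero_eta, Fin.mk_one] <;>
      first | rfl | linear_combination h | linear_combination -h
  by_cases hrow : ∀ k, v (0, k) = 0
  · refine ⟨e 1, WithLp.toLp 2 fun k => v (1, k), ?_⟩
    ext ⟨i, k⟩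
    fin_cases i <;> simp [tp, e, hrow]
  · push Not at hrow
    obtain ⟨k, hk⟩ := hrow
    refine ⟨!₂[1, v (1, k) / v (0, k)], WithLp.toLp 2 fun j => v (0, j), ?_⟩
    ext ⟨i, j⟩
    fin_cases i
    · simp [tp]
    · simp [tp]
      field_simp
      exact hminor j k

theorem stmt_6 (ψ0 ψ1 φ0 φ1 : Qubit)
    (hψ : Orthonormal ℂ ![ψ0, ψ1]) (hφ : Orthonormal ℂ ![φ0, φ1])
    (Ψ Φ : TwoQubit)
    (hΨ : Ψ = ((Real.sqrt 2 : ℂ))⁻¹ • (tp (e 0) ψ0 + tp (e 1) ψ1))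
    (hΦ : Φ = ((Real.sqrt 2 : ℂ))⁻¹ • (tp (e 0) φ0 + tp (e 1) φ1))
    (horth : inner ℂ Ψ Φ = (0 : ℂ))
    (hHerm : (ketBra φ0 ψ0 + ketBra φ1 ψ1)ᴴ = ketBra φ0 ψ0 + ketBra φ1 ψ1) :
    IsProduct (((Real.sqrt 2 : ℂ))⁻¹ • (Ψ + Φ)) := by
  rw [ketBra_add_ketBra] at hHerm
  set c : ℂ := ((Real.sqrt 2 : ℂ))⁻¹
  set A := colMatrix ![ψ0, ψ1]
  set B := colMatrix ![φ0, φ1]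
  have hA : Aᴴ * A = 1 := conjTranspose_colMatrix_mul_self_of_orthonormal hψ
  have hB : B * Bᴴ = 1 := mul_eq_one_comm.mp (conjTranspose_colMatrix_mul_self_of_orthonormal hφ)
  have hsq : B * Aᴴ * (B * Aᴴ) = 1 := calc
    B * Aᴴ * (B * Aᴴ) = B * Aᴴ * (B * Aᴴ)ᴴ := by rw [hHerm]
    _ = 1 := by
      rw [Matrix.conjTranspose_mul, Matrix.conjTranspose_conjTranspose, Matrix.mul_assoc,
        ← Matrix.mul_assoc Aᴴ, hA, Matrix.one_mul, hB]
  have htr : (B * Aᴴ).trace = 0 := by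
    have hc : c ≠ 0 := by simp [c]
    rw [hΨ, hΦ, inner_smul_left, inner_smul_right, inner_tp_e_add_tp_e] at horth
    rw [Matrix.trace_mul_comm, trace_conjTranspose_colMatrix_mul_colMatrix, Fin.sum_univ_two]
    simpa [hc] using horth
  have hdet : (A + B).det = 0 := by
    have hfactor : A + B = (1 + B * Aᴴ) * A := by
      rw [Matrix.add_mul, Matrix.one_mul, Matrix.mul_assoc, hA, Matrix.mul_one]
    rw [hfactor, Matrix.det_mul,
      Matrix.det_one_add_eq_zero_of_mul_self_eq_one_of_trace_eq_zero hsq htr, zero_mul]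
  apply isProduct_of_det_coeffMatrix_eq_zero
  rw [hΨ, hΦ, coeffMatrix_smul, coeffMatrix_add, coeffMatrix_smul, coeffMatrix_smul,
    coeffMatrix_tp_e_add_tp_e, coeffMatrix_tp_e_add_tp_e, ← smul_add, ← Matrix.transpose_add,
    Matrix.det_smul, Matrix.det_smul, Matrix.det_transpose, hdet]
  simp
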